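/- Let K be a compact Hausdorff space and let μ be a complex regular Borel measure on K. Then the holomorphic function f defined on the open unit ball of C(K) by f(x) = ∫_K x(t)/(1 − x(t)) dμ(t) is integral: there exists a complex Borel measure ν on the weak-* closed unit ball B' of the dual of C(K) such that f(x) = ∫_{B'} 1/(1 − γ(x)) dν(γ) for all x ∈ C(K) with ‖x‖_∞ < 1. -/

import Mathlib

/-! Since `x / (1 - x) = (1 - x)⁻¹ - 1`, the function is `∫_K (1 - x(t))⁻¹ dμ(t) - μ(K)`.
The first term is the integral of `(1 - γ(x))⁻¹` against the push-forward of `μ` under the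
point-evaluation embedding `K → B'`, and the constant `-μ(K)` is the integral of
`(1 - γ(x))⁻¹` against a point mass at the functional `γ = 0`, where that integrand is `1`. -/

open MeasureTheory Filter Topology

/-- The closed unit ball of the dual of `C(K, ℂ)`, with the weak-* topology. -/
abbrev DualBall (K : Type*) [TopologicalSpace K] [CompactSpace K] : Type _ :=
  {γ : WeakDual ℂ C(K, ℂ) // ∀ x : C(K, ℂ), ‖γ x‖ ≤ ‖x‖}

/-- Borel σ-algebra on the weak-* dual unit ball. -/
noncomputable instance (K : Type*) [TopologicalSpace K] [CompactSpace K] :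
    MeasurableSpace (DualBall K) := borel (DualBall K)

theorem MeasurableEmbedding.exists_polar_map_add_dirac {α β : Type*} [MeasurableSpace α]
    [MeasurableSpace β] [MeasurableSingletonClass β] {δ : α → β} (hδ : MeasurableEmbedding δ)
    (μ : Measure α) [IsFiniteMeasure μ] {w : α → ℂ} (hw : Measurable w) (hw1 : ∀ t, ‖w t‖ = 1)
    {b : β} (hb : b ∉ Set.range δ) (c : ℂ) :
    ∃ (ν : Measure β) (u : β → ℂ), IsFiniteMeasure ν ∧ Measurable u ∧ (∀ γ, ‖u γ‖ = 1) ∧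
      ∀ g : β → ℂ, Integrable (fun t => g (δ t) * w t) μ →
        ∫ γ, g γ * u γ ∂ν = ∫ t, g (δ t) * w t ∂μ + c * g b := by
  set s := Complex.exp (c.arg * Complex.I)
  set u := Function.extend δ w fun _ => s
  have hu_δ (t : α) : u (δ t) = w t := hδ.injective.extend_apply _ _ t
  have hu_off (γ : β) (hγ : γ ∉ Set.range δ) : u γ = s := Function.extend_apply' _ _ _ hγ
  refine ⟨μ.map δ + ‖c‖₊ • Measure.dirac b, u, inferInstance,
    hδ.measurable_extend hw measurable_const, fun γ => ?_, fun g hg => ?_⟩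
  · by_cases hγ : γ ∈ Set.range δ
    · obtain ⟨t, rfl⟩ := hγ
      rw [hu_δ, hw1]
    · rw [hu_off γ hγ, Complex.norm_exp_ofReal_mul_I]
  · have hmap : Integrable (fun γ => g γ * u γ) (μ.map δ) := by
      rw [hδ.integrable_map_iff]
      simpa only [Function.comp_def, hu_δ] using hg
    have hdirac : Integrable (fun γ => g γ * u γ) (‖c‖₊ • Measure.dirac b) :=
      (integrable_dirac enorm_lt_top).smul_measure ENNReal.coe_ne_top
    rw [integral_add_measure hmap hdirac, hδ.integral_map, integral_smul_nnreal_measure,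
      integral_dirac, hu_off b hb]
    simp only [hu_δ, NNReal.smul_def, coe_nnnorm, Complex.real_smul]
    linear_combination g b * Complex.norm_mul_exp_arg_mul_I c

namespace ContinuousMap

variable {K : Type*} [TopologicalSpace K] [CompactSpace K] {x : C(K, ℂ)}

theorem one_sub_apply_ne_zero (hx : ‖x‖ < 1) (t : K) : 1 - x t ≠ 0 := by
  intro h
  have := x.norm_coe_le_norm t
  rw [← sub_eq_zero.1 h, norm_one] at this
  linarith

theorem integrable_inv_one_sub_mul [MeasurableSpace K] [OpensMeasurableSpace K] {μ : Measure K}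
    (hx : ‖x‖ < 1) {w : K → ℂ} (hw : Integrable w μ) :
    Integrable (fun t => (1 - x t)⁻¹ * w t) μ := by
  let F : C(K, ℂ) := ⟨fun t => (1 - x t)⁻¹,
    (continuous_const.sub x.continuous).inv₀ (one_sub_apply_ne_zero hx)⟩
  exact hw.bdd_mul F.continuous.aestronglyMeasurable (.of_forall F.norm_coe_le_norm)

end ContinuousMap

namespace DualBall

variable {K : Type*} [TopologicalSpace K] [CompactSpace K]

instance : BorelSpace (DualBall K) := ⟨rfl⟩

noncomputable instance : Zero (DualBall K) :=
  ⟨⟨0, fun x => (norm_zero (E := ℂ)).trans_le (norm_nonneg x)⟩⟩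

@[simp]
theorem zero_apply (x : C(K, ℂ)) : (0 : DualBall K).1 x = 0 := rfl

noncomputable def eval (t : K) : DualBall K :=
  ⟨ContinuousMap.evalCLM ℂ t, fun x => x.norm_coe_le_norm t⟩

@[simp]
theorem eval_apply (t : K) (x : C(K, ℂ)) : (eval t).1 x = x t := rfl

theorem continuous_eval : Continuous (eval : K → DualBall K) :=
  (WeakDual.continuous_of_continuous_eval fun x => x.continuous).subtype_mk _

theorem eval_ne_zero (t : K) : eval t ≠ 0 := fun h => by
  simpa using congrArg (fun γ : DualBall K => γ.1 1) h

theorem injective_eval [T2Space K] : Function.Injective (eval : K → DualBall K) := by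
  intro s t h
  by_contra hst
  obtain ⟨g, hgs, hgt, -⟩ := exists_continuous_zero_one_of_isClosed isClosed_singleton
    isClosed_singleton (Set.disjoint_singleton.2 hst)
  have := congrArg
    (fun γ : DualBall K => γ.1 ((ContinuousMap.mk _ Complex.continuous_ofReal).comp g)) h
  simp [hgs rfl, hgt rfl] at this

theorem measurableEmbedding_eval [T2Space K] [MeasurableSpace K] [BorelSpace K] :
    MeasurableEmbedding (eval : K → DualBall K) :=
  (continuous_eval.isClosedEmbedding injective_eval).measurableEmbedding

end DualBall

theorem integralFn_of_measure_on_K_general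
    {K : Type*} [TopologicalSpace K] [CompactSpace K] [T2Space K]
    [MeasurableSpace K] [BorelSpace K]
    (μ : Measure K) [IsFiniteMeasure μ]
    (w : K → ℂ) (hw : Measurable w) (hw1 : ∀ t, ‖w t‖ = 1)
    (f : C(K, ℂ) → ℂ)
    (hfdef : ∀ x : C(K, ℂ), ‖x‖ < 1 → f x = ∫ t, (x t / (1 - x t)) * w t ∂μ) :
    ∃ (ν : Measure (DualBall K)) (u : DualBall K → ℂ),
      IsFiniteMeasure ν ∧ Measurable u ∧ (∀ γ, ‖u γ‖ = 1) ∧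
      ∀ x : C(K, ℂ), ‖x‖ < 1 → f x = ∫ γ, (1 - γ.1 x)⁻¹ * u γ ∂ν := by
  obtain ⟨ν, u, hν, hu, hu1, hνu⟩ :=
    DualBall.measurableEmbedding_eval.exists_polar_map_add_dirac μ hw hw1
      (b := 0) (by rintro ⟨t, ht⟩; exact DualBall.eval_ne_zero t ht) (-∫ t, w t ∂μ)
  refine ⟨ν, u, hν, hu, hu1, fun x hx => ?_⟩
  have hw_int : Integrable w μ :=
    .of_bound hw.aestronglyMeasurable 1 (.of_forall fun t => (hw1 t).le)
  have hinv_int := ContinuousMap.integrable_inv_one_sub_mul hx hw_int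
  have hsplit : (fun t => x t / (1 - x t) * w t) = fun t => (1 - x t)⁻¹ * w t - w t := by
    funext t
    field_simp [ContinuousMap.one_sub_apply_ne_zero hx t]
    ring
  rw [hfdef x hx, hsplit, integral_sub hinv_int hw_int,
    hνu (fun γ => (1 - γ.1 x)⁻¹) hinv_int]
  simp [sub_eq_add_neg]

/-- Let `μ` be a complex regular Borel measure on `K` (encoded in polar form
`w · μ` with `μ` finite positive regular and `w` unimodular).  Then the
holomorphic function `f x = ∫_K x(t)/(1 - x(t)) dμ(t)` on the open unit ball
of `C(K)` is integral: it is of the form `f x = ∫_{B'} (1 - γ(x))⁻¹ dν(γ)` for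
some complex Borel measure (in polar form `u · ν`) on the weak-* dual unit
ball. -/
theorem integralFn_of_measure_on_K
    {K : Type*} [TopologicalSpace K] [CompactSpace K] [T2Space K]
    [MeasurableSpace K] [BorelSpace K]
    (μ : Measure K) [IsFiniteMeasure μ] (hreg : μ.Regular)
    (w : K → ℂ) (hw : Measurable w) (hw1 : ∀ t, ‖w t‖ = 1)
    (f : C(K, ℂ) → ℂ)
    (hfdef : ∀ x : C(K, ℂ), ‖x‖ < 1 → f x = ∫ t, (x t / (1 - x t)) * w t ∂μ) :
    ∃ (ν : Measure (DualBall K)) (u : DualBall K → ℂ),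
      IsFiniteMeasure ν ∧ Measurable u ∧ (∀ γ, ‖u γ‖ = 1) ∧
      ∀ x : C(K, ℂ), ‖x‖ < 1 → f x = ∫ γ, (1 - γ.1 x)⁻¹ * u γ ∂ν :=
  integralFn_of_measure_on_K_general μ w hw hw1 f hfdef
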